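/- arXiv:2009.12828 — 2 statements merged into one kernel-verified Lean document; each statement's English description precedes it below -/
import Mathlib

section
/- Let (k, pk, val) be a key-update sequence over a type V, let L : ℕ, let w : V, and suppose that at some index m we have k m ≥ L and val m ≠ w. Then for every i ≥ m, either pk i ≥ L, or both k i ≥ L and val i ≠ w. (This is the inductive core of Lemma 'openLockSupport' of IT-HS: if a nonfaulty party once sent a key1 message in a view at least L with a value different from the lock value w, then in every later view its proof message, carrying key1, key1_val and prev_key1, supports opening any lock set at view L on value w.) -/
/-- A key-update sequence over a type `V`, modeling a party's updates of a key
field `k`, previous-key field `pk`, and key value `val` in IT-HS. At each step,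
either nothing changes, or `k` increases keeping `pk` and `val`, or `k`
increases, `pk` becomes the old `k`, and `val` changes. -/
structure KeyUpdateSeq (V : Type*) where
  k : ℕ → ℕ
  pk : ℕ → ℕ
  val : ℕ → V
  init : pk 0 < k 0
  step : ∀ i,
    (k (i + 1) = k i ∧ pk (i + 1) = pk i ∧ val (i + 1) = val i) ∨
    (k (i + 1) > k i ∧ pk (i + 1) = pk i ∧ val (i + 1) = val i) ∨
    (k (i + 1) > k i ∧ pk (i + 1) = k i ∧ val (i + 1) ≠ val i)

lemma KeyUpdateSeq.pk_lt_k {V : Type*} (s : KeyUpdateSeq V) : ∀ i, s.pk i < s.k i := by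
  intro i
  induction i with
  | zero => exact s.init
  | succ n ih =>
    rcases s.step n with ⟨h1, h2, _⟩ | ⟨h1, h2, _⟩ | ⟨h1, h2, _⟩ <;> omega

/-- Inductive core of Lemma openLockSupport: if at index `m` we have
`k m ≥ L` and `val m ≠ w`, then forever after either `pk ≥ L`, or
`k ≥ L` with value different from `w`. -/
theorem openLockSupport_invariant {V : Type*} (s : KeyUpdateSeq V)
    (L : ℕ) (w : V) (m : ℕ) (hk : s.k m ≥ L) (hv : s.val m ≠ w) :
    ∀ i, m ≤ i → s.pk i ≥ L ∨ (s.k i ≥ L ∧ s.val i ≠ w) := by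
  intro i hmi
  induction i with
  | zero =>
    have : m = 0 := Nat.le_zero.mp hmi
    subst this; exact Or.inr ⟨hk, hv⟩
  | succ n ih =>
    rcases Nat.lt_or_ge n m with h | h
    · have : m = n + 1 := by omega
      subst this; exact Or.inr ⟨hk, hv⟩
    · have IH := ih h
      have hpk := s.pk_lt_k n
      rcases s.step n with ⟨h1, h2, h3⟩ | ⟨h1, h2, h3⟩ | ⟨h1, h2, h3⟩
      · rw [h1, h2, h3]; exact IH
      · rcases IH with hl | ⟨hkl, hvw⟩
        · exact Or.inl (by omega)
        · exact Or.inr ⟨by omega, by rwa [h3]⟩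
      · rcases IH with hl | ⟨hkl, _⟩ <;> exact Or.inl (by omega)
end

section
/- Let (k, pk, val) be a key-update sequence over a type V, let L : ℕ, let w : V, and let m be an index such that pk m < L and (k m ≥ L → val m = w). Suppose moreover that for every i ≥ m, if k (i+1) ≠ k i and k (i+1) ≥ L then val (i+1) = w. Then for every i ≥ m, pk i < L and (k i ≥ L → val i = w). (This is the inductive invariant at the heart of Lemma 'uniqueDone' of IT-HS: once some nonfaulty party sends a done message for value w at view L = v*, every update of a nonfaulty party's key1 field to a view at least v* carries the value w, and consequently no nonfaulty party ever has prev_key1 ≥ v*, and key1 ≥ v* forces key1_val = w; this in turn prevents any lock on w from being opened and forces all later done messages to carry w.) -/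
/-- Inductive invariant at the heart of Lemma uniqueDone: if at index `m` we
have `pk m < L` and `k m ≥ L → val m = w`, and every later update of `k` to a
view at least `L` carries the value `w`, then forever after `pk < L` and
`k ≥ L` forces the value `w`. -/
theorem uniqueDone_invariant {V : Type*} (s : KeyUpdateSeq V)
    (L : ℕ) (w : V) (m : ℕ)
    (h1 : s.pk m < L) (h2 : s.k m ≥ L → s.val m = w)
    (h3 : ∀ i, m ≤ i → s.k (i + 1) ≠ s.k i → s.k (i + 1) ≥ L → s.val (i + 1) = w) :
    ∀ i, m ≤ i → s.pk i < L ∧ (s.k i ≥ L → s.val i = w) := by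
  intro i hi
  induction i with
  | zero =>
    have : m = 0 := Nat.le_zero.mp hi
    subst this; exact ⟨h1, h2⟩
  | succ n ih =>
    rcases Nat.lt_or_ge m (n+1) with hm | hm
    · have hmn : m ≤ n := Nat.lt_succ_iff.mp hm
      obtain ⟨ihp, ihv⟩ := ih hmn
      rcases s.step n with ⟨hk, hp, hv⟩ | ⟨hk, hp, hv⟩ | ⟨hk, hp, hv⟩
      · exact ⟨hp ▸ ihp, fun h => hv ▸ ihv (hk ▸ h)⟩
      · refine ⟨hp ▸ ihp, fun h => ?_⟩
        exact h3 n hmn (Nat.ne_of_gt hk) h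
      · have hkL : s.k n < L := by
          by_contra hge
          push_neg at hge
          have hw := ihv hge
          have hw' := h3 n hmn (Nat.ne_of_gt hk) (le_trans hge hk.le)
          exact hv (hw'.trans hw.symm)
        refine ⟨hp ▸ hkL, fun h => ?_⟩
        exact h3 n hmn (Nat.ne_of_gt hk) h
    · have : m = n + 1 := le_antisymm hi hm
      subst this; exact ⟨h1, h2⟩
end
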